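/- With Z ∈ ℝ^{D×F}, Z† Z = I_F, m ∈ ℝ^D, r = m − Z Z† m ≠ 0, b = r/‖r‖², X = Z Z†, and Z₊† the block left inverse of [Z | m] as above, one has [Z | m] Z₊† = X + r bᵀ. -/

import Mathlib

open Matrix

/-- Append a column `m` to the matrix `Z`. -/
def appendCol {D F : ℕ} (Z : Matrix (Fin D) (Fin F) ℝ) (m : Fin D → ℝ) :
    Matrix (Fin D) (Fin (F + 1)) ℝ :=
  Matrix.of fun i => Fin.snoc (Z i) (m i)

/-! By block multiplication `[Z | m] * [A; vᵀ] = Z A + m vᵀ`, so with `A = Z† (1 - m bᵀ)`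
the product is `X - X m bᵀ + m bᵀ = X + (m - X m) bᵀ = X + r bᵀ`, an identity valid for
every vector `b`. -/

theorem appendCol_mul_of_snoc {D F K : ℕ} (Z : Matrix (Fin D) (Fin F) ℝ) (m : Fin D → ℝ)
    (A : Matrix (Fin F) (Fin K) ℝ) (v : Fin K → ℝ) :
    appendCol Z m * Matrix.of (Fin.snoc A v) = Z * A + vecMulVec m v := by
  ext i j
  simp only [appendCol, Matrix.add_apply, mul_apply, of_apply, vecMulVec_apply,
    Fin.sum_univ_castSucc]
  simp [Fin.snoc]

theorem mul_one_sub_vecMulVec_add_vecMulVec {D : ℕ} (X : Matrix (Fin D) (Fin D) ℝ)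
    (m b : Fin D → ℝ) :
    X * (1 - vecMulVec m b) + vecMulVec m b = X + vecMulVec (m - X *ᵥ m) b := by
  rw [mul_sub, mul_one, mul_vecMulVec, sub_vecMulVec]
  abel

theorem stmt3_general (D F : ℕ) (Z : Matrix (Fin D) (Fin F) ℝ) (Zd : Matrix (Fin F) (Fin D) ℝ)
    (m : Fin D → ℝ)
    (X : Matrix (Fin D) (Fin D) ℝ) (hX : X = Z * Zd)
    (r : Fin D → ℝ) (hr : r = m - X.mulVec m)
    (b : Fin D → ℝ)
    (W : Matrix (Fin (F + 1)) (Fin D) ℝ)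
    (hW : W = Matrix.of (Fin.snoc (Zd * (1 - Matrix.vecMulVec m b)) b)) :
    appendCol Z m * W = X + Matrix.vecMulVec r b := by
  subst hW
  refine (appendCol_mul_of_snoc Z m (Zd * (1 - vecMulVec m b)) b).trans ?_
  rw [← Matrix.mul_assoc, ← hX, hr, mul_one_sub_vecMulVec_add_vecMulVec]

theorem stmt3 (D F : ℕ) (Z : Matrix (Fin D) (Fin F) ℝ) (Zd : Matrix (Fin F) (Fin D) ℝ)
    (hZ : Zd * Z = 1) (m : Fin D → ℝ)
    (X : Matrix (Fin D) (Fin D) ℝ) (hX : X = Z * Zd)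
    (r : Fin D → ℝ) (hr : r = m - X.mulVec m) (hr0 : r ≠ 0)
    (b : Fin D → ℝ) (hb : b = (r ⬝ᵥ r)⁻¹ • r)
    (W : Matrix (Fin (F + 1)) (Fin D) ℝ)
    (hW : W = Matrix.of (Fin.snoc (Zd * (1 - Matrix.vecMulVec m b)) b)) :
    appendCol Z m * W = X + Matrix.vecMulVec r b :=
  stmt3_general D F Z Zd m X hX r hr b W hW
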